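/- Fix n ≥ 2 and let p : Fin n → Bool → Bool → ℝ describe an empirical model on the cyclic scenario of rank n: for each i, p i is the joint distribution of the context (x_i, x_{i+1 mod n}), so p i a b ≥ 0 and ∑_{a,b} p i a b = 1. Suppose the model is PR-like, i.e. it has the same support as the standard PR-box: for every i ≠ n-1, p i a b ≠ 0 if and only if a = b, and p (n-1) a b ≠ 0 if and only if a ≠ b. Suppose further the model is non-signalling: for every i and every c : Bool, the marginal of x_{i+1 mod n} computed from context i equals that computed from context i+1 mod n, i.e. ∑_a p i a c = ∑_b p (i+1 mod n) c b. Then the model is exactly the PR-box: for every i ≠ n-1, p i a b = 1/2 if a = b and 0 otherwise, and p (n-1) a b = 1/2 if a ≠ b and 0 otherwise. -/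
import Mathlib


/-- On the cyclic scenario of rank `n ≥ 2` (here `n = m + 2`), an empirical
model `p` (each `p i` a distribution on the context `(x_i, x_{i+1 mod n})`)
that is PR-like — having the same support as the standard PR-box: correlated
on every context except the last, anti-correlated on the last — and
non-signalling must be exactly the PR-box, with every nonzero probability
equal to `1/2`. -/
theorem PRlike_nonsignalling_is_PRbox
    (m : ℕ) (p : Fin (m + 2) → Bool → Bool → ℝ)
    (hpos : ∀ (i : Fin (m + 2)) (a b : Bool), 0 ≤ p i a b)
    (hnorm : ∀ i : Fin (m + 2), ∑ a : Bool, ∑ b : Bool, p i a b = 1)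
    (hsupp_corr : ∀ i : Fin (m + 2), i ≠ Fin.last (m + 1) →
      ∀ a b : Bool, p i a b ≠ 0 ↔ a = b)
    (hsupp_anti : ∀ a b : Bool, p (Fin.last (m + 1)) a b ≠ 0 ↔ a ≠ b)
    (hns : ∀ (i : Fin (m + 2)) (c : Bool),
      ∑ a : Bool, p i a c = ∑ b : Bool, p (i + 1) c b) :
    (∀ i : Fin (m + 2), i ≠ Fin.last (m + 1) →
      ∀ a b : Bool, p i a b = if a = b then 1 / 2 else 0) ∧
    (∀ a b : Bool, p (Fin.last (m + 1)) a b = if a ≠ b then 1 / 2 else 0) := by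
  have zero_of_corr : ∀ (i : Fin (m + 2)), i ≠ Fin.last (m + 1) →
      p i true false = 0 ∧ p i false true = 0 := by
    intro i hi
    constructor
    · by_contra h; simpa using (hsupp_corr i hi true false).mp h
    · by_contra h; simpa using (hsupp_corr i hi false true).mp h
  have zero_anti_tt : p (Fin.last (m+1)) true true = 0 := by
    by_contra h; simpa using (hsupp_anti true true).mp h
  have zero_anti_ff : p (Fin.last (m+1)) false false = 0 := by
    by_contra h; simpa using (hsupp_anti false false).mp h
  have hlt : ∀ k : ℕ, ∀ hk : k < m + 1, (⟨k, by omega⟩ : Fin (m+2)) ≠ Fin.last (m+1) := by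
    intro k hk
    simp only [Fin.ne_iff_vne, Fin.last]
    simpa using by omega
  have step : ∀ k : ℕ, ∀ hk : k < m, p ⟨k+1, by omega⟩ true true = p ⟨k, by omega⟩ true true := by
    intro k hk
    have h1 := hns ⟨k, by omega⟩ true
    have hadd : (⟨k, by omega⟩ : Fin (m+2)) + 1 = ⟨k+1, by omega⟩ := by
      apply Fin.ext; simp [Fin.add_def]; omega
    rw [hadd] at h1
    have z1 := zero_of_corr ⟨k, by omega⟩ (hlt k (by omega))
    have z2 := zero_of_corr ⟨k+1, by omega⟩ (hlt (k+1) (by omega))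
    simp only [Fintype.sum_bool, z1.1, z1.2, z2.1, z2.2] at h1
    linarith
  have h0 : (0 : Fin (m+2)) = ⟨0, by omega⟩ := by apply Fin.ext; simp
  have const : ∀ k : ℕ, ∀ hk : k ≤ m, p ⟨k, by omega⟩ true true = p 0 true true := by
    intro k
    induction k with
    | zero => intro _; rw [h0]
    | succ n ih => intro hk; rw [step n (by omega)]; exact ih (by omega)
  have hlast : (⟨m, by omega⟩ : Fin (m+2)) + 1 = Fin.last (m+1) := by
    apply Fin.ext; simp only [Fin.add_def, Fin.val_one, Fin.val_last]
    rw [Nat.mod_eq_of_lt (by omega)]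
  have h1 := hns ⟨m, by omega⟩ true
  rw [hlast] at h1
  have zm := zero_of_corr ⟨m, by omega⟩ (hlt m (by omega))
  have z0 : p 0 true false = 0 ∧ p 0 false true = 0 := by
    rw [h0]; exact zero_of_corr ⟨0, by omega⟩ (hlt 0 (by omega))
  have h2 := hns (Fin.last (m+1)) true
  rw [Fin.last_add_one] at h2
  have hnl := hnorm (Fin.last (m+1))
  simp only [Fintype.sum_bool, zero_anti_tt, zero_anti_ff, zero_add, add_zero] at hnl
  have hum := const m le_rfl
  simp only [Fintype.sum_bool, zm.1, zm.2, zero_anti_tt, zero_add, add_zero] at h1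
  simp only [Fintype.sum_bool, zero_anti_tt, z0.1, zero_add, add_zero] at h2
  -- h1 : p ⟨m⟩ t t = p last t f ; h2 : p last f t = p 0 t t ; hnl : p last t f + p last f t = 1
  have hu2 : p 0 true true = 1/2 := by linarith
  constructor
  · intro i hi a b
    have hiv : i.val ≤ m := by
      have := i.isLt
      have hne : i.val ≠ m + 1 := fun h => hi (Fin.ext h)
      omega
    have hieq : i = ⟨i.val, by omega⟩ := Fin.ext rfl
    have htt : p i true true = 1/2 := by
      rw [hieq, const i.val hiv, hu2]
    have hz := zero_of_corr i hi
    have hni := hnorm i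
    simp only [Fintype.sum_bool, hz.1, hz.2, zero_add, add_zero] at hni
    cases a <;> cases b <;> simp [hz.1, hz.2, htt] <;> linarith
  · intro a b
    have htf : p (Fin.last (m+1)) true false = 1/2 := by
      rw [← h1, hum, hu2]
    have hft : p (Fin.last (m+1)) false true = 1/2 := by linarith
    cases a <;> cases b <;> simp [zero_anti_tt, zero_anti_ff, htf, hft]
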